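/- arXiv:1410.5111 — 2 statements merged into one kernel-verified Lean document; each statement's English description precedes it below -/
import Mathlib

section
/- Let (d_k) be a real sequence with |d_{k+1} - d_k| ≤ Tμ for all k, and let φ ∈ (-1,1). If a real sequence (ê_k) satisfies ê_{k+1} = 2Γ(d_{k+1} - d_{k-1}) + φ ê_{k-1} for all k ≥ 1, then limsup_{k→∞} |ê_k| ≤ 4|Γ|Tμ/(1-|φ|). -/
open Filter

/-! Over two steps the observer error contracts by `|φ|` up to an additive `4|Γ|Tμ`, since
`|d (k+2) - d k| ≤ 2Tμ`. Iterating `a (n + p) ≤ C + q a n` gives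
`a n ≤ C/(1-q) + q^(n/p) M`, where `C/(1-q) + M` bounds the first `p` terms, and the
geometric part dies out. -/

section ShiftedRecurrence

variable {a : ℕ → ℝ} {p : ℕ} {C q M : ℝ}

theorem le_div_add_pow_mul_of_le_add_mul (hp : 0 < p) (hq0 : 0 ≤ q) (hq1 : q ≠ 1)
    (hrec : ∀ n, a (n + p) ≤ C + q * a n) (hM : ∀ n < p, a n ≤ C / (1 - q) + M) (n : ℕ) :
    a n ≤ C / (1 - q) + q ^ (n / p) * M := by
  induction n using Nat.strong_induction_on with
  | _ n ih =>
    rcases lt_or_ge n p with hn | hn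
    · simpa [Nat.div_eq_of_lt hn] using hM n hn
    · obtain ⟨m, rfl⟩ := Nat.exists_eq_add_of_le' hn
      have hfix : C + q * (C / (1 - q)) = C / (1 - q) := by
        field_simp [sub_ne_zero.mpr hq1.symm]
        ring
      have hdiv : (m + p) / p = m / p + 1 := Nat.add_div_right m hp
      calc a (m + p) ≤ C + q * a m := hrec m
        _ ≤ C + q * (C / (1 - q) + q ^ (m / p) * M) := by
          gcongr; exact ih m (by omega)
        _ = C / (1 - q) + q ^ ((m + p) / p) * M := by
          rw [hdiv, pow_succ]; linear_combination hfix

theorem limsup_le_div_of_le_add_mul (hp : 0 < p) (ha : ∀ n, 0 ≤ a n) (hq0 : 0 ≤ q) (hq1 : q < 1)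
    (hrec : ∀ n, a (n + p) ≤ C + q * a n) : limsup a atTop ≤ C / (1 - q) := by
  obtain ⟨M, hM⟩ : ∃ M, ∀ n < p, a n ≤ C / (1 - q) + M := by
    obtain ⟨B, hB⟩ := ((Set.finite_Iio p).image a).bddAbove
    exact ⟨B - C / (1 - q), fun n hn => by linarith [hB ⟨n, hn, rfl⟩]⟩
  have hpow : Tendsto (fun n => q ^ (n / p)) atTop (nhds 0) :=
    (tendsto_pow_atTop_nhds_zero_of_lt_one hq0 hq1).comp (Nat.tendsto_div_const_atTop hp.ne')
  have hbound : Tendsto (fun n => C / (1 - q) + q ^ (n / p) * M) atTop (nhds (C / (1 - q))) := by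
    simpa using tendsto_const_nhds.add (hpow.mul_const M)
  calc limsup a atTop ≤ limsup (fun n => C / (1 - q) + q ^ (n / p) * M) atTop :=
        limsup_le_limsup
          (Eventually.of_forall (le_div_add_pow_mul_of_le_add_mul hp hq0 hq1.ne hrec hM))
          (isBoundedUnder_of ⟨0, ha⟩).isCoboundedUnder_le hbound.isBoundedUnder_le
    _ = C / (1 - q) := hbound.limsup_eq

end ShiftedRecurrence

theorem stmt_5_general (T μ Γ φ : ℝ) (hφ : φ ∈ Set.Ioo (-1:ℝ) 1)
    (d e : ℕ → ℝ) (hd : ∀ k, |d (k+1) - d k| ≤ T * μ)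
    (he : ∀ k, 1 ≤ k → e (k+1) = 2 * Γ * (d (k+1) - d (k-1)) + φ * e (k-1)) :
    Filter.limsup (fun k => |e k|) Filter.atTop ≤ 4 * |Γ| * T * μ / (1 - |φ|) := by
  have hstep : ∀ k, |e (k + 2)| ≤ 4 * |Γ| * T * μ + |φ| * |e k| := fun k => by
    have hd2 : |d (k + 2) - d k| ≤ 2 * (T * μ) :=
      (abs_sub_le _ (d (k + 1)) _).trans (by linarith [hd k, hd (k + 1)])
    calc |e (k + 2)| = |2 * Γ * (d (k + 2) - d k) + φ * e k| := by
          simpa using congrArg abs (he (k + 1) le_add_self)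
      _ ≤ 2 * |Γ| * |d (k + 2) - d k| + |φ| * |e k| := by
          simpa [abs_mul] using abs_add_le (2 * Γ * (d (k + 2) - d k)) (φ * e k)
      _ ≤ 4 * |Γ| * T * μ + |φ| * |e k| := by nlinarith [abs_nonneg Γ]
  exact limsup_le_div_of_le_add_mul two_pos (fun _ => abs_nonneg _) (abs_nonneg φ)
    (abs_lt.mpr hφ) hstep

theorem stmt_5 (T μ Γ φ : ℝ) (hT : 0 < T) (hμ : 0 < μ) (hφ : φ ∈ Set.Ioo (-1:ℝ) 1)
    (d e : ℕ → ℝ) (hd : ∀ k, |d (k+1) - d k| ≤ T * μ)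
    (he : ∀ k, 1 ≤ k → e (k+1) = 2 * Γ * (d (k+1) - d (k-1)) + φ * e (k-1)) :
    Filter.limsup (fun k => |e k|) Filter.atTop ≤ 4 * |Γ| * T * μ / (1 - |φ|) :=
  stmt_5_general T μ Γ φ hφ d e hd he
end

section
/- Let 0 < T₁ < T₂ and fix an attack with physical angular frequency Ω > 0 with ΩT₂ ≤ π. With sampled frequency ω = ΩT, the error-sensitivity magnitude g(T) = 2sin(ΩT/2)/√(4sin²(ΩT/2)(1-2η)+4η²) (with η ∈ (0,1/2]) satisfies g(T₁) ≤ g(T₂); i.e., decreasing the sampling period T (more frequent price updates) attenuates the impact of a fixed-frequency attack. -/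
theorem stmt_18 (T₁ T₂ Ω η : ℝ) (hT1 : 0 < T₁) (hT12 : T₁ < T₂) (hΩ : 0 < Ω)
    (hΩT : Ω * T₂ ≤ Real.pi) (hη : η ∈ Set.Ioc (0:ℝ) (1/2)) :
    2 * Real.sin (Ω * T₁ / 2) /
        Real.sqrt (4 * Real.sin (Ω * T₁ / 2)^2 * (1 - 2*η) + 4*η^2) ≤
      2 * Real.sin (Ω * T₂ / 2) /
        Real.sqrt (4 * Real.sin (Ω * T₂ / 2)^2 * (1 - 2*η) + 4*η^2) := by
  obtain ⟨hη0, hη2⟩ := hη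
  set x := Ω * T₁ / 2 with hxdef
  set y := Ω * T₂ / 2 with hydef
  have hx0 : 0 < x := by positivity
  have hxy : x < y := by
    have := hΩ
    unfold x y
    nlinarith
  have hy : y ≤ Real.pi / 2 := by
    unfold y; linarith
  have hs1 : 0 < Real.sin x := by
    apply Real.sin_pos_of_pos_of_lt_pi hx0
    linarith [Real.pi_pos]
  have hs2 : 0 < Real.sin y := by
    apply Real.sin_pos_of_pos_of_lt_pi (by linarith)
    linarith [Real.pi_pos]
  have hs12 : Real.sin x ≤ Real.sin y := by
    apply Real.sin_le_sin_of_le_of_le_pi_div_two (by linarith [Real.pi_pos]) hy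
    linarith
  set s₁ := Real.sin x
  set s₂ := Real.sin y
  have hA1 : 0 < 4 * s₁^2 * (1 - 2*η) + 4*η^2 := by nlinarith
  have hA2 : 0 < 4 * s₂^2 * (1 - 2*η) + 4*η^2 := by nlinarith
  rw [div_le_div_iff₀ (Real.sqrt_pos.mpr hA1) (Real.sqrt_pos.mpr hA2)]
  have h1 : 2 * s₁ * Real.sqrt (4 * s₂^2 * (1 - 2*η) + 4*η^2)
      = Real.sqrt ((2*s₁)^2 * (4 * s₂^2 * (1 - 2*η) + 4*η^2)) := by
    rw [Real.sqrt_mul (by positivity), Real.sqrt_sq (by positivity)]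
  have h2 : 2 * s₂ * Real.sqrt (4 * s₁^2 * (1 - 2*η) + 4*η^2)
      = Real.sqrt ((2*s₂)^2 * (4 * s₁^2 * (1 - 2*η) + 4*η^2)) := by
    rw [Real.sqrt_mul (by positivity), Real.sqrt_sq (by positivity)]
  rw [h1, h2]
  apply Real.sqrt_le_sqrt
  nlinarith [mul_nonneg (sq_nonneg η) (sub_nonneg.mpr (mul_self_le_mul_self hs1.le hs12))]
end
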